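/- Let K ⊆ ℝ^n be a convex body and let γ be a closed polygon in 𝒫⁺(K) such that len(γ) ≤ len(γ') for every closed polygon γ' ∈ 𝒫⁺(K). Then there exists x ∈ ℝ^n with (image of γ) + x ⊆ K. -/

import Mathlib

open scoped RealInnerProductSpace Pointwise
open Metric

noncomputable section

/-- Euclidean space ℝ^n. -/
abbrev Euc (n : ℕ) := EuclideanSpace ℝ (Fin n)

/-- The image of a closed polygon with vertices `q 0, …, q (m-1)` (indices mod `m`):
the union of the segments `[q i, q (i+1)]`. -/
def polyImage {n m : ℕ} [NeZero m] (q : Fin m → Euc n) : Set (Euc n) :=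
  ⋃ i : Fin m, segment ℝ (q i) (q (i + 1))

/-- The length of a closed polygon: `∑ i, ‖q (i+1) - q i‖`. -/
noncomputable def polyLength {n m : ℕ} [NeZero m] (q : Fin m → Euc n) : ℝ :=
  ∑ i : Fin m, ‖q (i + 1) - q i‖

/-- A convex body: a compact convex set with nonempty interior. -/
def IsConvexBody {n : ℕ} (K : Set (Euc n)) : Prop :=
  IsCompact K ∧ Convex ℝ K ∧ (interior K).Nonempty

/-- A closed polygon belongs to `𝒫⁺(K)` if no translate of its image is contained
in the interior of `K`. -/
def InPPlus {n m : ℕ} [NeZero m] (K : Set (Euc n)) (q : Fin m → Euc n) : Prop :=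
  ∀ x : Euc n, ¬ ((fun p => p + x) '' polyImage q ⊆ interior K)

/-- Unit direction of the `i`-th edge of a closed polygon. -/
noncomputable def dir {n m : ℕ} [NeZero m] (q : Fin m → Euc n) (i : Fin m) : Euc n :=
  ‖q (i + 1) - q i‖⁻¹ • (q (i + 1) - q i)

/-- Outer normal `ν i = u (i-1) - u i` at the `i`-th vertex. -/
noncomputable def normalVec {n m : ℕ} [NeZero m] (q : Fin m → Euc n) (i : Fin m) : Euc n :=
  dir q (i - 1) - dir q i

/-- A periodic billiard trajectory on a convex body `K`. -/
def IsBilliard {n m : ℕ} [NeZero m] (K : Set (Euc n)) (q : Fin m → Euc n) : Prop :=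
  2 ≤ m ∧ (∀ i, q (i + 1) ≠ q i) ∧ (∀ i, q i ∈ K) ∧
    ∀ i, normalVec q i ≠ 0 ∧ ∀ x ∈ K, ⟪x - q i, normalVec q i⟫ ≤ 0

/-! Shrinking `γ` by a factor `t < 1` shortens it (its length is positive, since a one-point
polygon can be translated into the nonempty interior of `K`), so by minimality `t • γ ∉ 𝒫⁺(K)`:
some translate of `t • γ` lies in the interior of `K`. Letting `t → 1`, compactness of `K`
yields a limit translation that carries `γ` into `K`. -/

theorem Fin.apply_eq_apply_zero_of_forall_add_one {α : Type*} {m : ℕ} [NeZero m] {f : Fin m → α}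
    (h : ∀ i, f (i + 1) = f i) (i : Fin m) : f i = f 0 := by
  obtain ⟨k, rfl⟩ := Nat.exists_eq_succ_of_ne_zero (NeZero.ne m)
  induction i using Fin.induction with
  | zero => rfl
  | succ i ih => rw [← Fin.coeSucc_eq_succ, h, ih]

theorem IsCompact.exists_translate_subset_of_forall_smul {E : Type*} [NormedAddCommGroup E]
    [NormedSpace ℝ E] {K S : Set E} (hK : IsCompact K) (hS : S.Nonempty)
    (h : ∀ t ∈ Set.Ioo (0 : ℝ) 1, ∃ x, (fun p => p + x) '' (t • S) ⊆ K) :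
    ∃ x, (fun p => p + x) '' S ⊆ K := by
  obtain ⟨p₀, hp₀⟩ := hS
  obtain ⟨t, -, ht, ht_lim⟩ := exists_seq_strictMono_tendsto' (zero_lt_one' ℝ)
  choose x hx using fun k => h (t k) (ht k)
  have hmem : ∀ k, ∀ p ∈ S, t k • p + x k ∈ K := fun k p hp =>
    hx k ⟨t k • p, Set.smul_mem_smul_set hp, rfl⟩
  -- The translations converge along the subsequence on which the images of `p₀` converge in `K`.
  obtain ⟨y, -, φ, hφ, hy⟩ := hK.tendsto_subseq fun k => hmem k p₀ hp₀
  have ht_lim' := ht_lim.comp hφ.tendsto_atTop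
  have hx_lim : Filter.Tendsto (x ∘ φ) Filter.atTop (nhds (y - p₀)) := by
    simpa [Function.comp_def] using hy.sub (ht_lim'.smul_const p₀)
  refine ⟨y - p₀, ?_⟩
  rintro _ ⟨p, hp, rfl⟩
  have hp_lim := (ht_lim'.smul_const p).add hx_lim
  rw [one_smul] at hp_lim
  exact hK.isClosed.mem_of_tendsto hp_lim (Filter.Eventually.of_forall fun k => hmem (φ k) p hp)

section Polygon

variable {n m : ℕ} [NeZero m]

theorem polyImage_smul (c : ℝ) (q : Fin m → Euc n) : polyImage (c • q) = c • polyImage q := by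
  simp only [polyImage, Set.smul_set_iUnion, Pi.smul_apply]
  refine Set.iUnion_congr fun i => ?_
  rw [← Set.image_smul]
  exact (image_segment ℝ (LinearMap.lsmul ℝ (Euc n) c).toAffineMap (q i) (q (i + 1))).symm

theorem polyLength_smul (c : ℝ) (q : Fin m → Euc n) : polyLength (c • q) = |c| * polyLength q := by
  simp only [polyLength, Finset.mul_sum, Pi.smul_apply, ← smul_sub, norm_smul, Real.norm_eq_abs]

theorem polyImage_nonempty (q : Fin m → Euc n) : (polyImage q).Nonempty :=
  ⟨q 0, Set.mem_iUnion.2 ⟨0, left_mem_segment ℝ _ _⟩⟩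

theorem polyImage_eq_singleton {q : Fin m → Euc n} {p : Euc n} (h : ∀ i, q i = p) :
    polyImage q = {p} := by
  simp [polyImage, h, segment_same]

theorem InPPlus.polyLength_pos {K : Set (Euc n)} {q : Fin m → Euc n} (hP : InPPlus K q)
    (hK : (interior K).Nonempty) : 0 < polyLength q := by
  refine (Finset.sum_nonneg fun i _ => norm_nonneg _).lt_of_ne fun h0 => ?_
  have hedge : ∀ i, q (i + 1) = q i := fun i => by
    simpa [sub_eq_zero] using
      (Finset.sum_eq_zero_iff_of_nonneg fun i _ => norm_nonneg _).1 h0.symm i (Finset.mem_univ i)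
  obtain ⟨y, hy⟩ := hK
  refine hP (y - q 0) ?_
  simpa [polyImage_eq_singleton (Fin.apply_eq_apply_zero_of_forall_add_one hedge)] using hy

theorem exists_translate_smul_subset_interior_of_minimal {K : Set (Euc n)} {q : Fin m → Euc n}
    (hpos : 0 < polyLength q)
    (hmin : ∀ q' : Fin m → Euc n, InPPlus K q' → polyLength q ≤ polyLength q')
    {t : ℝ} (ht₀ : 0 ≤ t) (ht₁ : t < 1) :
    ∃ x, (fun p => p + x) '' (t • polyImage q) ⊆ interior K := by
  by_contra! hfit
  have hle := hmin (t • q) fun x => by simpa [polyImage_smul] using hfit x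
  rw [polyLength_smul, abs_of_nonneg ht₀] at hle
  exact hle.not_gt (mul_lt_of_lt_one_left hpos ht₁)

end Polygon

theorem stmt14 {n m : ℕ} [NeZero m] (K : Set (Euc n)) (hK : IsConvexBody K)
    (q : Fin m → Euc n) (hP : InPPlus K q)
    (hmin : ∀ (m' : ℕ) [NeZero m'] (q' : Fin m' → Euc n),
      InPPlus K q' → polyLength q ≤ polyLength q') :
    ∃ x : Euc n, (fun p => p + x) '' polyImage q ⊆ K := by
  obtain ⟨hKc, -, hKint⟩ := hK
  refine hKc.exists_translate_subset_of_forall_smul (polyImage_nonempty q) fun t ht => ?_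
  obtain ⟨x, hx⟩ := exists_translate_smul_subset_interior_of_minimal (hP.polyLength_pos hKint)
    (hmin m) ht.1.le ht.2
  exact ⟨x, hx.trans interior_subset⟩
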